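/- Suppose D(t̄^k) ≥ ε_ij^k > 0, and suppose D(t) ≥ D(t̄^k) − d_i t_{i,i} − d_j t_{i,j} − (d_i + d_j)(t_{i0} + ϑ) where ϑ = D(t̄^k)/(2R(d_i + d_j)) and t_{i,i}, t_{i,j}, t_{i0} ≥ 0, R > 1/2. If ε_ij^k > Γ := d_i(t_{i,i} + t_{i0}) + d_j(t_{i,j} + t_{i0}) and R > ε_ij^k / (2(ε_ij^k − Γ)), then D(t) ≥ D(t̄^k)(1 − 1/(2R)) − Γ > 0. -/

import Mathlib

/-!
The delays shift the disagreement down by `Γ = dᵢ (tᵢᵢ + tᵢ₀) + dⱼ (tᵢⱼ + tᵢ₀)` plus the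
share `D(t̄ᵏ) / (2R)` lost during `ϑ`, so `D(t) ≥ D(t̄ᵏ) (1 - 1/(2R)) - Γ`. The adapted
gain `R > εᵏ / (2 (εᵏ - Γ))` says exactly that `εᵏ (1 - 1/(2R)) > Γ`, and `D(t̄ᵏ) ≥ εᵏ`
carries this over to `D(t̄ᵏ)` because `1 - 1/(2R) > 0`.
-/

lemma sub_sub_sub_mul_add_div_eq {x a b u v w R : ℝ} (hab : a + b ≠ 0) :
    x - a * u - b * v - (a + b) * (w + x / (2 * R * (a + b))) =
      x * (1 - 1 / (2 * R)) - (a * (u + w) + b * (v + w)) := by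
  field_simp
  ring

lemma one_sub_one_div_two_mul_pos {R : ℝ} (hR : 1 / 2 < R) : 0 < 1 - 1 / (2 * R) := by
  have : 1 / (2 * R) < 1 := by
    rw [div_lt_one (by linarith)]
    linarith
  linarith

lemma lt_mul_one_sub_one_div_of_div_lt {ε Γ R : ℝ} (hΓ : Γ < ε) (hR : 0 < R)
    (h : ε / (2 * (ε - Γ)) < R) : Γ < ε * (1 - 1 / (2 * R)) := by
  have hgain : ε < 2 * R * (ε - Γ) := by
    rw [div_lt_iff₀ (by linarith)] at h
    linarith
  have hshare : ε * (1 / (2 * R)) < ε - Γ := by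
    rw [mul_one_div, div_lt_iff₀ (by positivity)]
    linarith
  linarith

theorem self_adaptive_positive_general
    (D : ℝ → ℝ) (tbar t εk R di dj tii tij ti0 : ℝ)
    (hdi : 0 < di) (hdj : 0 < dj)
    (hD : εk ≤ D tbar) (hR : 1 / 2 < R)
    (hineq : D tbar - di * tii - dj * tij - (di + dj) * (ti0 + D tbar / (2 * R * (di + dj)))
      ≤ D t)
    (hΓ : di * (tii + ti0) + dj * (tij + ti0) < εk)
    (hRk : εk / (2 * (εk - (di * (tii + ti0) + dj * (tij + ti0)))) < R) :
    D tbar * (1 - 1 / (2 * R)) - (di * (tii + ti0) + dj * (tij + ti0)) ≤ D t ∧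
    0 < D t := by
  rw [sub_sub_sub_mul_add_div_eq (add_pos hdi hdj).ne'] at hineq
  refine ⟨hineq, lt_of_lt_of_le ?_ hineq⟩
  have hmargin := lt_mul_one_sub_one_div_of_div_lt hΓ (by linarith) hRk
  have hmono := mul_le_mul_of_nonneg_right hD (one_sub_one_div_two_mul_pos hR).le
  linarith

/-- Key inequality in the proof of Corollary 2 (self-adaptive scheme): with parameters
adapted to the observed delays, the disagreement remains strictly positive. -/
theorem self_adaptive_positive
    (D : ℝ → ℝ) (tbar t εk R di dj tii tij ti0 : ℝ)
    (hdi : 0 < di) (hdj : 0 < dj)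
    (htii : 0 ≤ tii) (htij : 0 ≤ tij) (hti0 : 0 ≤ ti0)
    (hεk : 0 < εk) (hD : εk ≤ D tbar) (hR : 1 / 2 < R)
    (hineq : D tbar - di * tii - dj * tij - (di + dj) * (ti0 + D tbar / (2 * R * (di + dj)))
      ≤ D t)
    (hΓ : di * (tii + ti0) + dj * (tij + ti0) < εk)
    (hRk : εk / (2 * (εk - (di * (tii + ti0) + dj * (tij + ti0)))) < R) :
    D tbar * (1 - 1 / (2 * R)) - (di * (tii + ti0) + dj * (tij + ti0)) ≤ D t ∧
    0 < D t :=
  self_adaptive_positive_general D tbar t εk R di dj tii tij ti0 hdi hdj hD hR hineq hΓ hRk
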